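/- arXiv:1405.0542 — 4 statements merged into one kernel-verified Lean document; each statement's English description precedes it below -/
import Mathlib

section
/- For all t in the open interval (-π/2, π/2), the function ξ(t) = (cos²t + 2t·sin t·cos t + t² − π²/4)/cos²t is nonpositive, i.e. cos²t + 2t·sin t·cos t + t² ≤ π²/4. -/
open Real

/-! The left side is at most `(cos t + |t|)²`, because `t sin t ≤ |t|` and `cos t ≥ 0`;
and `cos t = sin (π/2 - |t|) ≤ π/2 - |t|`. -/

namespace Real

lemma cos_le_pi_div_two_sub {x : ℝ} (hx : x ≤ π / 2) : cos x ≤ π / 2 - x := by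
  simpa only [sin_pi_div_two_sub] using sin_le (sub_nonneg.2 hx)

lemma mul_sin_le_abs (x : ℝ) : x * sin x ≤ |x| :=
  calc x * sin x ≤ |x * sin x| := le_abs_self _
    _ = |x| * |sin x| := abs_mul _ _
    _ ≤ |x| := mul_le_of_le_one_right (abs_nonneg x) (abs_sin_le_one x)

end Real

theorem xi_nonpos (t : ℝ) (ht : t ∈ Set.Ioo (-(π/2)) (π/2)) :
    Real.cos t ^ 2 + 2 * t * Real.sin t * Real.cos t + t ^ 2 ≤ π ^ 2 / 4 := by
  have hcos : 0 ≤ cos t := cos_nonneg_of_mem_Icc (Set.Ioo_subset_Icc_self ht)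
  have habs : |t| ≤ π / 2 := abs_le.2 ⟨ht.1.le, ht.2.le⟩
  have hsum : cos t + |t| ≤ π / 2 := by
    have := cos_le_pi_div_two_sub habs
    rw [cos_abs] at this
    linarith
  calc cos t ^ 2 + 2 * t * sin t * cos t + t ^ 2
      = cos t ^ 2 + 2 * (t * sin t) * cos t + |t| ^ 2 := by rw [sq_abs]; ring
    _ ≤ cos t ^ 2 + 2 * |t| * cos t + |t| ^ 2 := by gcongr; exact mul_sin_le_abs t
    _ = (cos t + |t|) ^ 2 := by ring
    _ ≤ (π / 2) ^ 2 := by gcongr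
    _ = π ^ 2 / 4 := by ring
end

section
/- For all t in (-π/2, π/2), the function ξ(t) = (cos²t + 2t·sin t·cos t + t² − π²/4)/cos²t satisfies ξ'(t)·sin t ≥ 0; equivalently, ξ is nondecreasing on [0, π/2) and nonincreasing on (−π/2, 0]. -/
open Real

noncomputable def xi (t : ℝ) : ℝ :=
  (Real.cos t ^ 2 + 2 * t * Real.sin t * Real.cos t + t ^ 2 - π ^ 2 / 4) / Real.cos t ^ 2

/-!
One computes `ξ'(t) sin t = 2 sin² t (h(t) - π²/4) / cos³ t` with `h(x) = x² + 2x cot x + cos² x`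
(`xiAux` below). Since `h'(x) = 2 cos² x (sin x cos x - x) / sin² x ≤ 0` (because `sin 2x ≤ 2x`),
the even function `h` decreases on `(0, π/2]` to `h(π/2) = π²/4`, so `h ≥ π²/4` away from `0`
and `ξ'` has the sign of `sin`.
-/

open Set

noncomputable def xiAux (x : ℝ) : ℝ := x ^ 2 + 2 * x * cos x / sin x + cos x ^ 2

lemma xiAux_neg (x : ℝ) : xiAux (-x) = xiAux x := by
  simp only [xiAux, sin_neg, cos_neg, neg_sq, div_neg]
  ring

lemma xiAux_pi_div_two : xiAux (π / 2) = π ^ 2 / 4 := by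
  simp only [xiAux, cos_pi_div_two, sin_pi_div_two]
  ring

lemma hasDerivAt_xiAux {x : ℝ} (hs : sin x ≠ 0) :
    HasDerivAt xiAux (2 * cos x ^ 2 * (sin x * cos x - x) / sin x ^ 2) x := by
  have h := ((hasDerivAt_pow 2 x).add
    ((((hasDerivAt_id x).const_mul 2).mul (hasDerivAt_cos x)).div (hasDerivAt_sin x) hs)).add
    ((hasDerivAt_cos x).pow 2)
  refine h.congr_deriv ?_
  simp only [id_eq, Pi.mul_apply]
  field_simp
  linear_combination -2 * sin x * cos x * sin_sq_add_cos_sq x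

lemma sin_mul_cos_le {x : ℝ} (hx : 0 ≤ x) : sin x * cos x ≤ x := by
  have := sin_le (by linarith : 0 ≤ 2 * x)
  rw [sin_two_mul] at this
  linarith

lemma antitoneOn_xiAux : AntitoneOn xiAux (Ioc 0 (π / 2)) := by
  have hs : ∀ x ∈ Ioc 0 (π / 2), sin x ≠ 0 := fun x hx =>
    (sin_pos_of_pos_of_lt_pi hx.1 (by linarith [hx.2, pi_pos])).ne'
  refine antitoneOn_of_hasDerivWithinAt_nonpos (convex_Ioc 0 (π / 2))
    (fun x hx => (hasDerivAt_xiAux (hs x hx)).continuousAt.continuousWithinAt)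
    (fun x hx => (hasDerivAt_xiAux (hs x (interior_subset hx))).hasDerivWithinAt) fun x hx => ?_
  rw [interior_Ioc] at hx
  have := sin_mul_cos_le hx.1.le
  exact div_nonpos_of_nonpos_of_nonneg
    (mul_nonpos_of_nonneg_of_nonpos (by positivity) (by linarith)) (sq_nonneg _)

lemma pi_sq_div_four_le_xiAux {x : ℝ} (hx : x ∈ Icc (-(π / 2)) (π / 2)) (hx0 : x ≠ 0) :
    π ^ 2 / 4 ≤ xiAux x := by
  have pos_case : ∀ y ∈ Ioc 0 (π / 2), π ^ 2 / 4 ≤ xiAux y := fun y hy =>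
    xiAux_pi_div_two ▸ antitoneOn_xiAux hy ⟨by linarith [hy.1, hy.2], le_rfl⟩ hy.2
  rcases hx0.lt_or_gt with hneg | hpos
  · rw [← xiAux_neg]
    exact pos_case (-x) ⟨by linarith, by linarith [hx.1]⟩
  · exact pos_case x ⟨hpos, hx.2⟩

lemma hasDerivAt_xi {t : ℝ} (hc : cos t ≠ 0) :
    HasDerivAt xi
      (2 * (2 * t * cos t ^ 3 + sin t * (cos t ^ 2 + 2 * t * sin t * cos t + t ^ 2 - π ^ 2 / 4))
        / cos t ^ 3) t := by
  have h := (((((hasDerivAt_cos t).pow 2).add ((((hasDerivAt_id t).const_mul 2).mul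
    (hasDerivAt_sin t)).mul (hasDerivAt_cos t))).add (hasDerivAt_pow 2 t)).sub_const
    (π ^ 2 / 4)).div ((hasDerivAt_cos t).pow 2) (pow_ne_zero 2 hc)
  refine h.congr_deriv ?_
  simp only [id_eq, Pi.mul_apply, Pi.pow_apply, Pi.add_apply]
  field_simp
  linear_combination -8 * t * cos t ^ 2 * sin_sq_add_cos_sq t

lemma deriv_xi_mul_sin {t : ℝ} (hc : cos t ≠ 0) :
    deriv xi t * sin t = 2 * sin t ^ 2 * (xiAux t - π ^ 2 / 4) / cos t ^ 3 := by
  rw [(hasDerivAt_xi hc).deriv]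
  rcases eq_or_ne (sin t) 0 with hs | hs
  · simp [hs]
  · simp only [xiAux]
    field_simp
    linear_combination 8 * t * cos t * sin_sq_add_cos_sq t

lemma deriv_xi_mul_sin_nonneg {t : ℝ} (ht : t ∈ Ioo (-(π / 2)) (π / 2)) :
    0 ≤ deriv xi t * sin t := by
  have hc := cos_pos_of_mem_Ioo ht
  rw [deriv_xi_mul_sin hc.ne']
  rcases eq_or_ne t 0 with rfl | ht0
  · simp
  · have := sub_nonneg.2 (pi_sq_div_four_le_xiAux (Ioo_subset_Icc_self ht) ht0)
    positivity

lemma differentiableOn_xi : DifferentiableOn ℝ xi (Ioo (-(π / 2)) (π / 2)) := fun _ ht =>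
  (hasDerivAt_xi (cos_pos_of_mem_Ioo ht).ne').differentiableAt.differentiableWithinAt

theorem xi_deriv_sin_nonneg :
    (∀ t ∈ Set.Ioo (-(π/2)) (π/2), deriv xi t * Real.sin t ≥ 0) ∧
    MonotoneOn xi (Set.Ico 0 (π/2)) ∧ AntitoneOn xi (Set.Ioc (-(π/2)) 0) := by
  have hpi := pi_pos
  refine ⟨fun t ht => deriv_xi_mul_sin_nonneg ht, ?_, ?_⟩
  · have hsub : Ico 0 (π / 2) ⊆ Ioo (-(π / 2)) (π / 2) := fun x hx => ⟨by linarith [hx.1], hx.2⟩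
    refine monotoneOn_of_deriv_nonneg (convex_Ico _ _) (differentiableOn_xi.continuousOn.mono hsub)
      (differentiableOn_xi.mono (interior_subset.trans hsub)) fun x hx => ?_
    rw [interior_Ico] at hx
    exact nonneg_of_mul_nonneg_left (deriv_xi_mul_sin_nonneg (hsub (Ioo_subset_Ico_self hx)))
      (sin_pos_of_pos_of_lt_pi hx.1 (by linarith [hx.2]))
  · have hsub : Ioc (-(π / 2)) 0 ⊆ Ioo (-(π / 2)) (π / 2) := fun x hx => ⟨hx.1, by linarith [hx.2]⟩
    refine antitoneOn_of_deriv_nonpos (convex_Ioc _ _) (differentiableOn_xi.continuousOn.mono hsub)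
      (differentiableOn_xi.mono (interior_subset.trans hsub)) fun x hx => ?_
    rw [interior_Ioc] at hx
    exact nonpos_of_mul_nonneg_left (deriv_xi_mul_sin_nonneg (hsub (Ioo_subset_Ioc_self hx)))
      (sin_neg_of_neg_of_neg_pi_lt hx.2 (by linarith [hx.1]))
end

section
/- The function ξ(t) = (cos²t + 2t·sin t·cos t + t² − π²/4)/cos²t attains its minimum on (-π/2, π/2) at t = 0, with minimum value ξ(0) = 1 − π²/4; hence 1 − π²/4 ≤ ξ(t) ≤ 0 for all t in (-π/2, π/2). -/
open Real

/-!
Write `xi t = (xiNum t - π²/4) / cos² t`. Since `xiNum' t = 4 t cos² t`, `xiNum` increases on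
`[0, π/2]` up to `xiNum (π/2) = π²/4`, whence `xi ≤ 0`. For the lower bound,
`xi t - xi 0 = tan² t · (psi t - π²/4)` with `psi t = (t² + 2 t sin t cos t) / sin² t`, and
`psi' t = 2 cos t (sin² t - t²) / sin³ t ≤ 0` on `(0, π/2]` because `sin t < t`, so
`psi t ≥ psi (π/2) = π²/4`. Evenness of `xi` reduces everything to `t ≥ 0`.
-/

lemma xi_zero : xi 0 = 1 - π ^ 2 / 4 := by
  simp [xi]

lemma xi_neg (t : ℝ) : xi (-t) = xi t := by
  simp only [xi, cos_neg, sin_neg]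
  ring

lemma xi_abs (t : ℝ) : xi |t| = xi t := by
  rcases abs_choice t with h | h <;> simp only [h, xi_neg]

noncomputable def xiNum (t : ℝ) : ℝ :=
  cos t ^ 2 + 2 * t * sin t * cos t + t ^ 2

lemma xi_eq_xiNum (t : ℝ) : xi t = (xiNum t - π ^ 2 / 4) / cos t ^ 2 := rfl

lemma hasDerivAt_xiNum (t : ℝ) : HasDerivAt xiNum (4 * t * cos t ^ 2) t := by
  refine ((((hasDerivAt_cos t).pow 2).add
    ((((hasDerivAt_id t).const_mul 2).mul (hasDerivAt_sin t)).mul (hasDerivAt_cos t))).add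
    (hasDerivAt_pow 2 t)).congr_deriv ?_
  simp only [id, Pi.mul_apply]
  linear_combination (-(2 * t)) * sin_sq_add_cos_sq t

lemma monotoneOn_xiNum : MonotoneOn xiNum (Set.Ici 0) :=
  monotoneOn_of_hasDerivWithinAt_nonneg (convex_Ici 0)
    (fun x _ => (hasDerivAt_xiNum x).continuousAt.continuousWithinAt)
    (fun x _ => (hasDerivAt_xiNum x).hasDerivWithinAt)
    (fun x hx => by
      have : 0 < x := by simpa using hx
      positivity)

lemma xiNum_pi_div_two : xiNum (π / 2) = π ^ 2 / 4 := by
  simp only [xiNum, cos_pi_div_two, sin_pi_div_two]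
  ring

lemma xi_nonpos_s5 {t : ℝ} (h0 : 0 ≤ t) (h1 : t ≤ π / 2) : xi t ≤ 0 := by
  have hnum : xiNum t ≤ π ^ 2 / 4 :=
    xiNum_pi_div_two ▸ monotoneOn_xiNum h0 (Set.mem_Ici.2 (by positivity)) h1
  rw [xi_eq_xiNum]
  exact div_nonpos_of_nonpos_of_nonneg (by linarith) (sq_nonneg _)

noncomputable def psi (t : ℝ) : ℝ :=
  (t ^ 2 + 2 * t * sin t * cos t) / sin t ^ 2

lemma xi_sub_eq_tan_sq_mul {t : ℝ} (hs : sin t ≠ 0) (hc : cos t ≠ 0) :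
    xi t - (1 - π ^ 2 / 4) = tan t ^ 2 * (psi t - π ^ 2 / 4) := by
  rw [xi, psi, tan_eq_sin_div_cos]
  field_simp
  linear_combination π ^ 2 * sin_sq_add_cos_sq t

lemma hasDerivAt_psi {t : ℝ} (hs : sin t ≠ 0) :
    HasDerivAt psi (2 * cos t * (sin t ^ 2 - t ^ 2) / sin t ^ 3) t := by
  refine (((hasDerivAt_pow 2 t).add
    ((((hasDerivAt_id t).const_mul 2).mul (hasDerivAt_sin t)).mul (hasDerivAt_cos t))).div
    ((hasDerivAt_sin t).pow 2) (pow_ne_zero 2 hs)).congr_deriv ?_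
  simp only [id, Pi.mul_apply, Pi.pow_apply, Pi.add_apply]
  field_simp
  linear_combination (-2 * t * sin t ^ 2) * sin_sq_add_cos_sq t

lemma antitoneOn_psi : AntitoneOn psi (Set.Ioc 0 (π / 2)) := by
  have hsin : ∀ x ∈ Set.Ioc 0 (π / 2), 0 < sin x := fun x hx =>
    sin_pos_of_pos_of_lt_pi hx.1 (by linarith [hx.2, pi_pos])
  refine antitoneOn_of_hasDerivWithinAt_nonpos (convex_Ioc 0 (π / 2))
    (fun x hx => (hasDerivAt_psi (hsin x hx).ne').continuousAt.continuousWithinAt)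
    (fun x hx => (hasDerivAt_psi (hsin x (interior_subset hx)).ne').hasDerivWithinAt)
    (fun x hx => ?_)
  rw [interior_Ioc] at hx
  have hs : 0 < sin x := hsin x (Set.Ioo_subset_Ioc_self hx)
  have hc : 0 < cos x := cos_pos_of_mem_Ioo ⟨by linarith [hx.1, pi_pos], hx.2⟩
  have hsx : sin x ^ 2 ≤ x ^ 2 := pow_le_pow_left₀ hs.le (sin_lt hx.1).le 2
  exact div_nonpos_of_nonpos_of_nonneg
    (mul_nonpos_of_nonneg_of_nonpos (by positivity) (by linarith)) (by positivity)

lemma psi_pi_div_two : psi (π / 2) = π ^ 2 / 4 := by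
  simp only [psi, cos_pi_div_two, sin_pi_div_two]
  ring

lemma one_sub_pi_sq_div_four_le_xi {t : ℝ} (h0 : 0 ≤ t) (h1 : t < π / 2) :
    1 - π ^ 2 / 4 ≤ xi t := by
  rcases h0.eq_or_lt with rfl | hpos
  · exact xi_zero.ge
  have hs : 0 < sin t := sin_pos_of_pos_of_lt_pi hpos (by linarith [pi_pos])
  have hc : 0 < cos t := cos_pos_of_mem_Ioo ⟨by linarith, h1⟩
  have hpsi : π ^ 2 / 4 ≤ psi t :=
    psi_pi_div_two ▸ antitoneOn_psi ⟨hpos, h1.le⟩ ⟨by positivity, le_rfl⟩ h1.le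
  rw [← sub_nonneg, xi_sub_eq_tan_sq_mul hs.ne' hc.ne']
  exact mul_nonneg (sq_nonneg _) (sub_nonneg.2 hpsi)

theorem xi_min_at_zero :
    xi 0 = 1 - π ^ 2 / 4 ∧
    ∀ t ∈ Set.Ioo (-(π/2)) (π/2), 1 - π ^ 2 / 4 ≤ xi t ∧ xi t ≤ 0 := by
  refine ⟨xi_zero, fun t ht => ?_⟩
  have h0 : 0 ≤ |t| := abs_nonneg t
  have h1 : |t| < π / 2 := abs_lt.2 ht
  rw [← xi_abs]
  exact ⟨one_sub_pi_sq_div_four_le_xi h0 h1, xi_nonpos_s5 h0 h1.le⟩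
end

section
/- Let δ ≤ 0 and z(t) = 1 + δ·ξ(t) with ξ(t) = (cos²t + 2t·sin t·cos t + t² − π²/4)/cos²t. Then z satisfies (1/2)·z''(t)·cos²t − z'(t)·cos t·sin t − z(t) = −1 + 2δ·cos²t and z'(t)·sin t ≤ 0 for all t in (-π/2, π/2). -/
/-!
The differential identity is a direct computation: `ξ' = 2N/cos³` (with `N = xiDerivNum`) and
`ξ''` are explicit, and `ξ'' cos²/2 - ξ' cos sin - ξ = 2 cos²`. For the sign, `N` is odd and
for `0 < t ≤ π/2` we have `N t = sin t (H t - π²/4)` with `H x = cos² x + 2x cot x + x²`.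
Since `H' = 2 cos² (sin x cos x - x) / sin² ≤ 0` on `(0, π)` and `H (π/2) = π²/4`, this
gives `N t ≥ 0`, hence `ξ' sin ≥ 0`.
-/

open Real

noncomputable def xiDerivNum (t : ℝ) : ℝ :=
  sin t * cos t ^ 2 + 2 * t * cos t + sin t * (t ^ 2 - π ^ 2 / 4)

noncomputable def xiDeriv (t : ℝ) : ℝ :=
  2 * xiDerivNum t / cos t ^ 3

noncomputable def xiDeriv2 (t : ℝ) : ℝ :=
  (6 * cos t ^ 2 + 12 * t * sin t * cos t + (2 + 4 * sin t ^ 2) * (t ^ 2 - π ^ 2 / 4)) /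
    cos t ^ 4

lemma hasDerivAt_xi_s8 {t : ℝ} (hc : cos t ≠ 0) : HasDerivAt xi (xiDeriv t) t := by
  have hnum : HasDerivAt (fun x => cos x ^ 2 + 2 * x * sin x * cos x + x ^ 2 - π ^ 2 / 4)
      (2 * t * (cos t ^ 2 - sin t ^ 2) + 2 * t) t :=
    ((((hasDerivAt_cos t).fun_pow 2).add ((((hasDerivAt_id' t).const_mul 2).fun_mul
      (hasDerivAt_sin t)).mul (hasDerivAt_cos t))).add (hasDerivAt_pow 2 t)).sub_const
      (π ^ 2 / 4) |>.congr_deriv (by push_cast; ring)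
  refine (hnum.div ((hasDerivAt_cos t).fun_pow 2) (pow_ne_zero 2 hc)).congr_deriv ?_
  unfold xiDeriv xiDerivNum
  field_simp
  linear_combination 8 * t * cos t ^ 2 * sin_sq_add_cos_sq t

lemma hasDerivAt_xiDeriv {t : ℝ} (hc : cos t ≠ 0) : HasDerivAt xiDeriv (xiDeriv2 t) t := by
  have hnum : HasDerivAt xiDerivNum
      (cos t ^ 3 - 2 * sin t ^ 2 * cos t + 2 * cos t + cos t * (t ^ 2 - π ^ 2 / 4)) t :=
    (((hasDerivAt_sin t).mul ((hasDerivAt_cos t).fun_pow 2)).add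
      (((hasDerivAt_id' t).const_mul 2).fun_mul (hasDerivAt_cos t))).add
      ((hasDerivAt_sin t).mul ((hasDerivAt_pow 2 t).sub_const (π ^ 2 / 4))) |>.congr_deriv
      (by push_cast; ring)
  refine ((hnum.const_mul 2).div ((hasDerivAt_cos t).fun_pow 3) (pow_ne_zero 3 hc)).congr_deriv ?_
  unfold xiDeriv2 xiDerivNum
  field_simp
  linear_combination cos t ^ 2 * (8 * cos t ^ 2 + 8 * t ^ 2 - 2 * π ^ 2) * sin_sq_add_cos_sq t

lemma xi_ode {t : ℝ} (hc : cos t ≠ 0) :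
    (1 / 2) * xiDeriv2 t * cos t ^ 2 - xiDeriv t * cos t * sin t - xi t = 2 * cos t ^ 2 := by
  unfold xiDeriv2 xiDeriv xiDerivNum xi
  field_simp
  linear_combination (-16 : ℝ) * cos t ^ 2 * sin_sq_add_cos_sq t

lemma hasDerivAt_cos_sq_add_two_mul_cot_add_sq {x : ℝ} (hs : sin x ≠ 0) :
    HasDerivAt (fun y => cos y ^ 2 + 2 * y * cos y / sin y + y ^ 2)
      (2 * cos x ^ 2 * (cos x * sin x - x) / sin x ^ 2) x := by
  refine (((hasDerivAt_cos x).fun_pow 2).add ((((hasDerivAt_id' x).const_mul 2).fun_mul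
    (hasDerivAt_cos x)).fun_div (hasDerivAt_sin x) hs) |>.add (hasDerivAt_pow 2 x)).congr_deriv ?_
  field_simp
  linear_combination -2 * cos x * sin x * sin_sq_add_cos_sq x

lemma antitoneOn_cos_sq_add_two_mul_cot_add_sq :
    AntitoneOn (fun x => cos x ^ 2 + 2 * x * cos x / sin x + x ^ 2) (Set.Ioo 0 π) := by
  have hderiv : ∀ x ∈ Set.Ioo 0 π, HasDerivAt (fun y => cos y ^ 2 + 2 * y * cos y / sin y + y ^ 2)
      (2 * cos x ^ 2 * (cos x * sin x - x) / sin x ^ 2) x := fun x hx =>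
    hasDerivAt_cos_sq_add_two_mul_cot_add_sq (sin_pos_of_mem_Ioo hx).ne'
  refine antitoneOn_of_hasDerivWithinAt_nonpos (convex_Ioo 0 π)
    (fun x hx => (hderiv x hx).continuousAt.continuousWithinAt)
    (fun x hx => (hderiv x (interior_subset hx)).hasDerivWithinAt) fun x hx => ?_
  rw [interior_Ioo] at hx
  have hsin_lt : sin x < x := sin_lt hx.1
  have hcos_mul_sin_le : cos x * sin x ≤ sin x :=
    mul_le_of_le_one_left (sin_pos_of_mem_Ioo hx).le (cos_le_one x)
  exact div_nonpos_of_nonpos_of_nonneg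
    (mul_nonpos_of_nonneg_of_nonpos (by positivity) (by linarith)) (sq_nonneg _)

lemma xiDerivNum_nonneg {t : ℝ} (h0 : 0 ≤ t) (hπ : t ≤ π / 2) : 0 ≤ xiDerivNum t := by
  rcases h0.eq_or_lt with rfl | h0
  · simp [xiDerivNum]
  have hs : 0 < sin t := sin_pos_of_pos_of_lt_pi h0 (by linarith [pi_pos])
  have hmem : ∀ {x}, 0 < x → x ≤ π / 2 → x ∈ Set.Ioo 0 π := fun hx hx' =>
    ⟨hx, by linarith [pi_pos]⟩
  have hle := antitoneOn_cos_sq_add_two_mul_cot_add_sq (hmem h0 hπ)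
    (hmem (by positivity) le_rfl) hπ
  simp only [cos_pi_div_two, sin_pi_div_two] at hle
  have hnum : xiDerivNum t = sin t * (cos t ^ 2 + 2 * t * cos t / sin t + t ^ 2 - π ^ 2 / 4) := by
    unfold xiDerivNum
    field_simp
    ring
  rw [hnum]
  exact mul_nonneg hs.le (by linarith)

lemma sin_mul_xiDerivNum_nonneg {t : ℝ} (ht : |t| ≤ π / 2) : 0 ≤ sin t * xiDerivNum t := by
  have hπ : 0 ≤ π := pi_pos.le
  rcases le_total 0 t with h | h
  · rw [abs_of_nonneg h] at ht
    exact mul_nonneg (sin_nonneg_of_nonneg_of_le_pi h (by linarith)) (xiDerivNum_nonneg h ht)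
  · rw [abs_of_nonpos h] at ht
    have hodd : sin t * xiDerivNum t = sin (-t) * xiDerivNum (-t) := by
      simp only [xiDerivNum, sin_neg, cos_neg]
      ring
    rw [hodd]
    exact mul_nonneg (sin_nonneg_of_nonneg_of_le_pi (by linarith) (by linarith))
      (xiDerivNum_nonneg (by linarith) ht)

lemma xiDeriv_mul_sin_nonneg {t : ℝ} (ht : t ∈ Set.Ioo (-(π / 2)) (π / 2)) :
    0 ≤ xiDeriv t * sin t := by
  have hc : 0 < cos t := cos_pos_of_mem_Ioo ht
  have hnum := sin_mul_xiDerivNum_nonneg (abs_le.2 ⟨ht.1.le, ht.2.le⟩)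
  rw [xiDeriv, div_mul_eq_mul_div, mul_assoc, mul_comm (xiDerivNum t)]
  positivity

lemma deriv_xi {t : ℝ} (hc : cos t ≠ 0) : deriv xi t = xiDeriv t :=
  (hasDerivAt_xi_s8 hc).deriv

lemma deriv_deriv_xi {t : ℝ} (hc : cos t ≠ 0) : deriv (deriv xi) t = xiDeriv2 t := by
  have hnear : ∀ᶠ x in nhds t, cos x ≠ 0 := continuous_cos.continuousAt.eventually_ne hc
  have hderiv : deriv xi =ᶠ[nhds t] xiDeriv := hnear.mono fun x hx => deriv_xi hx
  rw [hderiv.deriv_eq]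
  exact (hasDerivAt_xiDeriv hc).deriv

theorem z_ode_and_monotone (δ : ℝ) (hδ : δ ≤ 0) :
    let z : ℝ → ℝ := fun t => 1 + δ * xi t
    ∀ t ∈ Set.Ioo (-(π/2)) (π/2),
      (1/2) * deriv (deriv z) t * Real.cos t ^ 2
        - deriv z t * Real.cos t * Real.sin t - z t = -1 + 2 * δ * Real.cos t ^ 2 ∧
      deriv z t * Real.sin t ≤ 0 := by
  intro z t ht
  have hc : cos t ≠ 0 := (cos_pos_of_mem_Ioo ht).ne'
  have hz' : deriv z = fun x => δ * deriv xi x := by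
    simp only [z, deriv_const_add', deriv_const_mul_field']
  have hz'' : deriv (deriv z) t = δ * xiDeriv2 t := by
    simp only [hz', deriv_const_mul_field', deriv_deriv_xi hc]
  rw [hz'']
  simp only [hz', deriv_xi hc]
  constructor
  · linear_combination δ * xi_ode hc
  · rw [mul_assoc]
    exact mul_nonpos_of_nonpos_of_nonneg hδ (xiDeriv_mul_sin_nonneg ht)
end
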